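/- arXiv:1503.01575 — 3 statements merged into one kernel-verified Lean document; each statement's English description precedes it below -/
import Mathlib

section
/- Let H be an n×n Hermitian matrix, a a real number with a < 0, J the n×n all-ones matrix, and M = H + aJ. Let τ_1 < ⋯ < τ_r be the distinct main eigenvalues of H and μ_1 < ⋯ < μ_r the distinct main eigenvalues of M (there are equally many). Then the strict interlacing μ_1 < τ_1 < μ_2 < τ_2 < ⋯ < μ_r < τ_r holds. -/
open Matrix
open scoped Classical

noncomputable def eigSp {V : Type*} [Fintype V] [DecidableEq V]
    (H : Matrix V V ℂ) (μ : ℝ) : Submodule ℂ (EuclideanSpace ℂ V) :=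
  LinearMap.ker (Matrix.toEuclideanLin H - (μ : ℂ) • LinearMap.id)

noncomputable def mainAngle {V : Type*} [Fintype V] [DecidableEq V]
    (H : Matrix V V ℂ) (μ : ℝ) : ℝ :=
  (1 / Real.sqrt (Fintype.card V)) *
    ‖((eigSp H μ).orthogonalProjectionOnto (WithLp.toLp 2 (fun _ => 1)) : EuclideanSpace ℂ V)‖

noncomputable def eigMult {V : Type*} [Fintype V] [DecidableEq V]
    (H : Matrix V V ℂ) (μ : ℝ) : ℕ :=
  Module.finrank ℂ (eigSp H μ)

/-- `A` is the adjacency matrix of a tournament: a (0,1)-matrix with `A + Aᵀ = J - I`. -/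
def IsTournament {V : Type*} [Fintype V] [DecidableEq V] (A : Matrix V V ℂ) : Prop :=
  (∀ i j, A i j = 0 ∨ A i j = 1) ∧
    A + Aᵀ = Matrix.of (fun _ _ => (1 : ℂ)) - 1

/-- `φ` is a representation of the tournament with adjacency matrix `A` in `Ω(d)`,
with angle `α` (Im α > 0). -/
def IsRepresentation {n d : ℕ} (A : Matrix (Fin n) (Fin n) ℂ) (α : ℂ)
    (φ : Fin n → EuclideanSpace ℂ (Fin d)) : Prop :=
  0 < α.im ∧ (∀ x, ‖φ x‖ = 1) ∧
    ∀ x y : Fin n, x ≠ y →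
      (A x y = 1 → (inner ℂ (φ x) (φ y) : ℂ) = α) ∧
      (A y x = 1 → (inner ℂ (φ x) (φ y) : ℂ) = (starRingEnd ℂ) α)

def Representable {n : ℕ} (A : Matrix (Fin n) (Fin n) ℂ) (d : ℕ) : Prop :=
  ∃ (α : ℂ) (φ : Fin n → EuclideanSpace ℂ (Fin d)), IsRepresentation A α φ

noncomputable def RepDim {n : ℕ} (A : Matrix (Fin n) (Fin n) ℂ) : ℕ :=
  sInf {d | Representable A d}

/-- doubly regular tournament -/
def IsDoublyRegular {V : Type*} [Fintype V] [DecidableEq V] (A : Matrix V V ℂ) : Prop :=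
  IsTournament A ∧
    A *ᵥ (fun _ => 1) = (fun _ => ((Fintype.card V : ℂ) - 1) / 2) ∧
    A * Aᵀ = (((Fintype.card V : ℂ) + 1) / 4) • 1 +
      (((Fintype.card V : ℂ) - 3) / 4) • Matrix.of (fun _ _ => (1 : ℂ))

/-- skew Hadamard matrix -/
def IsSkewHadamard {V : Type*} [Fintype V] [DecidableEq V] (H : Matrix V V ℂ) : Prop :=
  (∀ i j, H i j = 1 ∨ H i j = -1) ∧
    H + Hᵀ = (2 : ℂ) • 1 ∧ H * Hᵀ = (Fintype.card V : ℂ) • 1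

/-- 2-code -/
def IsTwoCode {d : ℕ} (X : Finset (EuclideanSpace ℂ (Fin d))) (α : ℂ) : Prop :=
  α.im ≠ 0 ∧ (∀ x ∈ X, ‖x‖ = 1) ∧
    {z : ℂ | ∃ x ∈ X, ∃ y ∈ X, x ≠ y ∧ (inner ℂ x y : ℂ) = z} = {α, (starRingEnd ℂ) α}

/-- adjacency matrix of a 2-code -/
noncomputable def codeAdj {d : ℕ} (X : Finset (EuclideanSpace ℂ (Fin d))) (α : ℂ) :
    Matrix {x // x ∈ X} {x // x ∈ X} ℂ :=
  Matrix.of fun x y =>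
    if (x : EuclideanSpace ℂ (Fin d)) ≠ (y : EuclideanSpace ℂ (Fin d)) ∧
        (inner ℂ (x : EuclideanSpace ℂ (Fin d)) (y : EuclideanSpace ℂ (Fin d)) : ℂ) = α
    then 1 else 0

/-!
Let `w k` be the projection of the all-ones vector `j` onto the `τ k`-eigenspace of `H`; these
vectors sum to `j`. For `ν` outside the spectrum, `x = ∑ k, (τ k - ν)⁻¹ • w k` solves
`(H - ν) x = j`, so `x` is a `ν`-eigenvector of `M = H + a j j*` as soon as `1 + a ⟪j, x⟫ = 0`,
i.e. as soon as `ν` is a root of the secular function `1 + a ∑ k, ‖w k‖² / (τ k - t)`; and then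
`⟪j, x⟫ ≠ 0` makes `ν` a main eigenvalue of `M`. As `a < 0`, the secular function tends to `1`
at `-∞`, to `-∞` just below each `τ k` and to `+∞` just above it, so it has a root below `τ 0`
and one in each gap `(τ (k - 1), τ k)`. These `r` roots are main eigenvalues of `M`, which has
exactly `r` of them, so they are the `μ k`.
-/

open Filter Topology Finset Set

section Secular

variable {ι : Type*} [Fintype ι]

noncomputable def secular (a : ℝ) (τ b : ι → ℝ) (t : ℝ) : ℝ :=
  1 + a * ∑ k, b k / (τ k - t)

theorem continuousOn_secular (a : ℝ) (τ b : ι → ℝ) :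
    ContinuousOn (secular a τ b) {t | ∀ k, τ k ≠ t} :=
  continuousOn_const.add <| continuousOn_const.mul <| continuousOn_finsetSum _ fun k _ =>
    continuousOn_const.div (by fun_prop) fun _ ht => sub_ne_zero.2 (ht k)

theorem tendsto_secular_atBot (a : ℝ) (τ b : ι → ℝ) :
    Tendsto (secular a τ b) atBot (𝓝 1) := by
  unfold secular
  have hsum : Tendsto (fun t => ∑ k, b k / (τ k - t)) atBot (𝓝 0) := by
    simpa using tendsto_finsetSum (univ : Finset ι) fun k _ => tendsto_const_nhds.div_atTop
      ((tendsto_atTop_add_const_left _ (τ k) tendsto_neg_atBot_atTop).congr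
        fun t => (sub_eq_add_neg _ t).symm)
  simpa using (hsum.const_mul a).const_add 1

theorem tendsto_const_sub_nhdsLT (c : ℝ) : Tendsto (fun t => c - t) (𝓝[<] c) (𝓝[>] 0) :=
  tendsto_nhdsWithin_iff.2
    ⟨by simpa using ((continuous_sub_left c).tendsto c).mono_left nhdsWithin_le_nhds,
      eventually_nhdsWithin_of_forall fun _ ht => mem_Ioi.2 (sub_pos.2 ht)⟩

theorem tendsto_const_sub_nhdsGT (c : ℝ) : Tendsto (fun t => c - t) (𝓝[>] c) (𝓝[<] 0) :=
  tendsto_nhdsWithin_iff.2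
    ⟨by simpa using ((continuous_sub_left c).tendsto c).mono_left nhdsWithin_le_nhds,
      eventually_nhdsWithin_of_forall fun _ ht => mem_Iio.2 (sub_neg.2 ht)⟩

theorem continuousAt_sum_erase_div_sub {τ : ι → ℝ} (hτ : Function.Injective τ) (b : ι → ℝ)
    (k : ι) : ContinuousAt (fun t => ∑ l ∈ univ.erase k, b l / (τ l - t)) (τ k) :=
  tendsto_finsetSum _ fun _ hl => continuousAt_const.div (by fun_prop)
    (sub_ne_zero.2 fun h => (mem_erase.1 hl).1 (hτ h))

theorem tendsto_sum_div_sub_nhdsLT {τ b : ι → ℝ} (hτ : Function.Injective τ) {k : ι}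
    (hb : 0 < b k) : Tendsto (fun t => ∑ l, b l / (τ l - t)) (𝓝[<] τ k) atTop := by
  simp_rw [← add_sum_erase _ _ (mem_univ k), div_eq_mul_inv (b k)]
  exact ((tendsto_const_sub_nhdsLT _).inv_tendsto_nhdsGT_zero.const_mul_atTop hb).atTop_add
    ((continuousAt_sum_erase_div_sub hτ b k).tendsto.mono_left nhdsWithin_le_nhds)

theorem tendsto_sum_div_sub_nhdsGT {τ b : ι → ℝ} (hτ : Function.Injective τ) {k : ι}
    (hb : 0 < b k) : Tendsto (fun t => ∑ l, b l / (τ l - t)) (𝓝[>] τ k) atBot := by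
  simp_rw [← add_sum_erase _ _ (mem_univ k), div_eq_mul_inv (b k)]
  exact ((tendsto_const_sub_nhdsGT _).inv_tendsto_nhdsLT_zero.const_mul_atBot hb).atBot_add
    ((continuousAt_sum_erase_div_sub hτ b k).tendsto.mono_left nhdsWithin_le_nhds)

variable {a : ℝ} {τ b : ι → ℝ}

theorem tendsto_secular_nhdsLT (ha : a < 0) (hτ : Function.Injective τ) {k : ι} (hb : 0 < b k) :
    Tendsto (secular a τ b) (𝓝[<] τ k) atBot :=
  tendsto_atBot_add_const_left _ 1 ((tendsto_sum_div_sub_nhdsLT hτ hb).const_mul_atTop_of_neg ha)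

theorem tendsto_secular_nhdsGT (ha : a < 0) (hτ : Function.Injective τ) {k : ι} (hb : 0 < b k) :
    Tendsto (secular a τ b) (𝓝[>] τ k) atTop :=
  tendsto_atTop_add_const_left _ 1 ((tendsto_sum_div_sub_nhdsGT hτ hb).const_mul_atBot_of_neg ha)

theorem exists_secular_eq_zero_of_pos (ha : a < 0) (hτ : Function.Injective τ)
    (hb : ∀ k, 0 < b k) {t₁ : ℝ} {i : ι} (hlt : t₁ < τ i) (hpos : 0 < secular a τ b t₁)
    (hgap : ∀ k, τ k < t₁ ∨ τ i ≤ τ k) : ∃ ν ∈ Ioo t₁ (τ i), secular a τ b ν = 0 := by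
  obtain ⟨t₂, hneg, ht₂⟩ := (((tendsto_secular_nhdsLT ha hτ (hb i)).eventually
    (eventually_lt_atBot 0)).and (Ioo_mem_nhdsLT hlt)).exists
  have hcont : ContinuousOn (secular a τ b) (Icc t₁ t₂) :=
    (continuousOn_secular a τ b).mono fun t ht k => by
      rcases hgap k with h | h
      · exact (h.trans_le ht.1).ne
      · exact (ht.2.trans_lt (ht₂.2.trans_le h)).ne'
  obtain ⟨ν, hν, hzero⟩ := intermediate_value_Ioo' ht₂.1.le hcont ⟨hneg, hpos⟩
  exact ⟨ν, ⟨hν.1, hν.2.trans ht₂.2⟩, hzero⟩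

end Secular

theorem exists_secular_eq_zero_interlacing {r : ℕ} {a : ℝ} {τ b : Fin r → ℝ} (ha : a < 0)
    (hτ : StrictMono τ) (hb : ∀ k, 0 < b k) (i : Fin r) :
    ∃ ν, secular a τ b ν = 0 ∧ ν < τ i ∧ ∀ k < i, τ k < ν := by
  obtain ⟨t₁, hpos, hlt, hgap⟩ :
      ∃ t₁, 0 < secular a τ b t₁ ∧ t₁ < τ i ∧ ∀ k, τ k < t₁ ∨ τ i ≤ τ k := by
    obtain ⟨_ | p, hi⟩ := i
    · obtain ⟨t₁, hpos, hlt⟩ := (((tendsto_secular_atBot a τ b).eventually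
        (lt_mem_nhds one_pos)).and (eventually_lt_atBot _)).exists
      exact ⟨t₁, hpos, hlt, fun k => .inr (hτ.monotone (Nat.zero_le _))⟩
    · have hp : p < r := by omega
      obtain ⟨t₁, hpos, hmem⟩ := (((tendsto_secular_nhdsGT ha hτ.injective (hb ⟨p, hp⟩)).eventually
        (eventually_gt_atTop 0)).and (Ioo_mem_nhdsGT (hτ (show (⟨p, hp⟩ : Fin r) < ⟨p + 1, hi⟩
          from Nat.lt_succ_self p)))).exists
      refine ⟨t₁, hpos, hmem.2, fun k => ?_⟩
      rcases le_or_gt k ⟨p, hp⟩ with hk | hk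
      · exact .inl ((hτ.monotone hk).trans_lt hmem.1)
      · exact .inr (hτ.monotone hk)
  obtain ⟨ν, hν, hzero⟩ := exists_secular_eq_zero_of_pos ha hτ.injective hb hlt hpos hgap
  refine ⟨ν, hzero, hν.2, fun k hk => ?_⟩
  rcases hgap k with h | h
  · exact h.trans hν.1
  · exact absurd (hτ.le_iff_le.1 h) (not_le.2 hk)

theorem StrictMono.eq_of_forall_mem_range {β α : Type*} [LinearOrder β] [Finite β] [Preorder α]
    {f g : β → α} (hf : StrictMono f) (hg : StrictMono g) (h : ∀ i, f i ∈ range g) : f = g := by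
  refine (hf.range_inj hg).1 (eq_of_subset_of_ncard_le (range_subset_iff.2 h) ?_)
  rw [ncard_range_of_injective hf.injective, ncard_range_of_injective hg.injective]

section InnerProductSpace

variable {𝕜 E : Type*} [RCLike 𝕜] [NormedAddCommGroup E] [InnerProductSpace 𝕜 E]

theorem Submodule.inner_starProjection_self (K : Submodule 𝕜 E) [K.HasOrthogonalProjection]
    (v : E) : inner 𝕜 v (K.starProjection v) = ((‖K.starProjection v‖ ^ 2 : ℝ) : 𝕜) := by
  calc inner 𝕜 v (K.starProjection v) = inner 𝕜 v (K.starProjection (K.starProjection v)) := by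
        rw [K.starProjection_eq_self_iff.2 (K.starProjection_apply_mem v)]
    _ = inner 𝕜 (K.starProjection v) (K.starProjection v) :=
        (K.inner_starProjection_left_eq_right _ _).symm
    _ = _ := by rw [inner_self_eq_norm_sq_to_K]; norm_cast

open Module.End in
theorem LinearMap.IsSymmetric.sum_starProjection_eigenspace_eq_self [FiniteDimensional 𝕜 E]
    {T : E →ₗ[𝕜] E} (hT : T.IsSymmetric) {ι : Type*} [Fintype ι] {τ : ι → ℝ}
    (hτ : Function.Injective τ) {v : E}
    (hv : ∀ t : ℝ, (eigenspace T (t : 𝕜)).starProjection v ≠ 0 → t ∈ Set.range τ) :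
    ∑ i, (eigenspace T (τ i : 𝕜)).starProjection v = v := by
  have hcomp : ∀ (t : ℝ) (i : ι), (eigenspace T (t : 𝕜)).starProjection
      ((eigenspace T (τ i : 𝕜)).starProjection v) =
        if τ i = t then (eigenspace T (t : 𝕜)).starProjection v else 0 := by
    intro t i
    split_ifs with h
    · rw [h, Submodule.starProjection_eq_self_iff]
      exact Submodule.starProjection_apply_mem _ v
    · exact congr($((hT.orthogonalFamily_eigenspaces.isOrtho
        (RCLike.ofReal_injective.ne (Ne.symm h))).starProjection_comp_starProjection) v)
  have hreal : ∀ t : ℝ,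
      v - ∑ i, (eigenspace T (τ i : 𝕜)).starProjection v ∈ (eigenspace T (t : 𝕜))ᗮ := by
    intro t
    rw [← Submodule.starProjection_apply_eq_zero_iff, map_sub, map_sum]
    simp_rw [hcomp]
    by_cases ht : t ∈ Set.range τ
    · obtain ⟨k, rfl⟩ := ht
      simp [hτ.eq_iff]
    · rw [sum_eq_zero fun i _ => if_neg fun h => ht ⟨i, h⟩, sub_zero]
      exact not_imp_comm.1 (hv t) ht
  refine (sub_eq_zero.1 ?_).symm
  rw [← Submodule.mem_bot 𝕜, ← hT.orthogonalComplement_iSup_eigenspaces_eq_bot,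
    ← Submodule.iInf_orthogonal, Submodule.mem_iInf]
  intro μ
  by_cases hμ : HasEigenvalue T μ
  · rw [← RCLike.conj_eq_iff_re.1 (hT.conj_eigenvalue_eq_self hμ)]
    exact hreal _
  · rw [hasEigenvalue_iff, not_not] at hμ
    simp [hμ]

theorem Module.End.sub_smul_sum_inv_sub_smul {T : E →ₗ[𝕜] E} {ι : Type*} [Fintype ι]
    {τ : ι → 𝕜} {w : ι → E} (hw : ∀ k, T (w k) = τ k • w k) {ν : 𝕜} (hν : ∀ k, τ k ≠ ν) :
    T (∑ k, (τ k - ν)⁻¹ • w k) - ν • ∑ k, (τ k - ν)⁻¹ • w k = ∑ k, w k := by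
  simp_rw [map_sum, map_smul, hw, smul_sum, ← sum_sub_distrib, smul_smul, ← sub_smul]
  refine sum_congr rfl fun k _ => ?_
  rw [mul_comm ν, ← mul_sub, inv_mul_cancel₀ (sub_ne_zero.2 (hν k)), one_smul]

end InnerProductSpace

section AllOnes

variable {V : Type*} [Fintype V] [DecidableEq V]

local notation "𝐣" => (WithLp.toLp 2 fun _ => (1 : ℂ) : EuclideanSpace ℂ V)

theorem eigSp_eq_eigenspace (H : Matrix V V ℂ) (t : ℝ) :
    eigSp H t = Module.End.eigenspace (toEuclideanLin H) (t : ℂ) := by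
  ext x
  simp [eigSp, sub_eq_zero]

theorem mainAngle_ne_zero_iff {H : Matrix V V ℂ} {t : ℝ} :
    mainAngle H t ≠ 0 ↔ (eigSp H t).starProjection 𝐣 ≠ 0 := by
  rw [mainAngle, ← Submodule.starProjection_apply, mul_ne_zero_iff, norm_ne_zero_iff,
    and_iff_right_iff_imp]
  intro h
  have : Nonempty V := by
    by_contra hV
    rw [not_nonempty_iff] at hV
    exact h (Subsingleton.elim _ _)
  simp [Fintype.card_ne_zero]

theorem mainAngle_ne_zero_of_inner_ne_zero {H : Matrix V V ℂ} {t : ℝ}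
    {x : EuclideanSpace ℂ V} (hx : x ∈ eigSp H t) (hjx : inner ℂ 𝐣 x ≠ 0) :
    mainAngle H t ≠ 0 := by
  rw [mainAngle_ne_zero_iff, Ne, Submodule.starProjection_apply_eq_zero_iff]
  exact fun hj => hjx (inner_eq_zero_symm.1 (hj x hx))

theorem toEuclideanLin_allOnes (y : EuclideanSpace ℂ V) :
    toEuclideanLin (of fun _ _ => (1 : ℂ)) y = inner ℂ 𝐣 y • 𝐣 := by
  ext
  simp [toLpLin_apply, mulVec, dotProduct, PiLp.inner_apply]

theorem mainAngle_add_smul_allOnes_ne_zero {H : Matrix V V ℂ} {ι : Type*} [Fintype ι]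
    {τ : ι → ℝ} {w : ι → EuclideanSpace ℂ V} (hw : ∀ k, w k ∈ eigSp H (τ k))
    (hsum : ∑ k, w k = 𝐣) (hjw : ∀ k, inner ℂ 𝐣 (w k) = ((‖w k‖ ^ 2 : ℝ) : ℂ)) {a ν : ℝ}
    (hν : ∀ k, τ k ≠ ν) (hsec : secular a τ (fun k => ‖w k‖ ^ 2) ν = 0) :
    mainAngle (H + (a : ℂ) • of fun _ _ => (1 : ℂ)) ν ≠ 0 := by
  set x := ∑ k, ((τ k : ℂ) - ν)⁻¹ • w k
  have hres : toEuclideanLin H x - (ν : ℂ) • x = 𝐣 :=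
    hsum ▸ Module.End.sub_smul_sum_inv_sub_smul
      (fun k => Module.End.mem_eigenspace_iff.1 (eigSp_eq_eigenspace H _ ▸ hw k))
      fun k => Complex.ofReal_injective.ne (hν k)
  have hjx : 1 + (a : ℂ) * inner ℂ 𝐣 x = 0 := by
    simp_rw [x, inner_sum, inner_smul_right, hjw, ← div_eq_inv_mul]
    exact_mod_cast hsec
  refine mainAngle_ne_zero_of_inner_ne_zero (x := x) ?_ fun h => by simp [h] at hjx
  rw [eigSp_eq_eigenspace, Module.End.mem_eigenspace_iff, map_add, LinearMap.add_apply,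
    map_smul, LinearMap.smul_apply, toEuclideanLin_allOnes, smul_smul]
  linear_combination (norm := module) hres + hjx • 𝐣

end AllOnes

/-- if `a < 0`, the distinct main eigenvalues of `H` and of `M = H + a J`
strictly interlace as `μ 1 < τ 1 < μ 2 < τ 2 < ⋯ < μ r < τ r`. -/
theorem main_eigenvalue_interlacing_neg {n r : ℕ} (H : Matrix (Fin n) (Fin n) ℂ)
    (hH : H.IsHermitian) (a : ℝ) (ha : a < 0) (M : Matrix (Fin n) (Fin n) ℂ)
    (hM : M = H + (a : ℂ) • Matrix.of (fun _ _ => (1 : ℂ)))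
    (τ : Fin r → ℝ) (hτ : StrictMono τ)
    (hmainH : ∀ t : ℝ, mainAngle H t ≠ 0 ↔ ∃ i, τ i = t)
    (μ : Fin r → ℝ) (hμ : StrictMono μ)
    (hmainM : ∀ t : ℝ, mainAngle M t ≠ 0 ↔ ∃ i, μ i = t) :
    (∀ i : Fin r, μ i < τ i) ∧
      ∀ (i : Fin r) (h : (i : ℕ) + 1 < r), τ i < μ ⟨(i : ℕ) + 1, h⟩ := by
  set j : EuclideanSpace ℂ (Fin n) := WithLp.toLp 2 fun _ => 1
  set w : Fin r → EuclideanSpace ℂ (Fin n) := fun k => (eigSp H (τ k)).starProjection j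
  have hsum : ∑ k, w k = j := by
    simp only [w, eigSp_eq_eigenspace]
    refine (isSymmetric_toEuclideanLin_iff.2 hH).sum_starProjection_eigenspace_eq_self
      hτ.injective fun t ht => (hmainH t).1 (mainAngle_ne_zero_iff.2 ?_)
    rwa [eigSp_eq_eigenspace]
  have hw : ∀ k, 0 < ‖w k‖ ^ 2 := fun k =>
    pow_pos (norm_pos_iff.2 (mainAngle_ne_zero_iff.1 ((hmainH _).2 ⟨k, rfl⟩))) 2
  choose ν hsec hντ hτν using exists_secular_eq_zero_interlacing ha hτ hw
  have hν_main : ∀ i, ν i ∈ Set.range μ := fun i => (hmainM _).1 <| hM ▸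
    mainAngle_add_smul_allOnes_ne_zero (fun k => Submodule.starProjection_apply_mem _ j)
      hsum (fun k => Submodule.inner_starProjection_self _ j)
      (fun k => (lt_or_ge k i).elim (fun hk => (hτν i k hk).ne)
        fun hk => ((hντ i).trans_le (hτ.monotone hk)).ne') (hsec i)
  obtain rfl : ν = μ := StrictMono.eq_of_forall_mem_range
    (fun i k hik => (hντ i).trans (hτν k i hik)) hμ hν_main
  exact ⟨hντ, fun i h => hτν _ i (Nat.lt_succ_self _)⟩
end

section
/- Let d be a positive integer. There is no tournament on n = 2d vertices whose Seidel matrix S = i(A − Aᵀ) has exactly the eigenvalues −θ, 0, θ with multiplicities d − 1, 2, d − 1 respectively for some θ > 0, and whose smallest eigenvalue −θ is not a main eigenvalue. -/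
open Matrix
open scoped Classical

/-!
Since `-θ` is not main, the all-ones vector `j` is orthogonal to `E(-θ)`, and by counting
dimensions `E(-θ)ᗮ = E(0) ⊕ E(θ)`; write `j = b + c` accordingly. As `S` is `i` times a real
skew-symmetric matrix, `⟪j, S j⟫ = 0`, while `⟪j, S j⟫ = θ ‖c‖²`; so `c = 0` and `S j = 0`.
Thus every vertex has equal in- and out-degree, summing to `2d - 1`, which is odd.
-/

open Module Finset

lemma Submodule.orthogonal_eq_sup_of_finrank_add_eq {𝕜 E : Type*} [RCLike 𝕜] [NormedAddCommGroup E]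
    [InnerProductSpace 𝕜 E] [FiniteDimensional 𝕜 E] {K L M : Submodule 𝕜 E}
    (hKL : K ⟂ L) (hKM : K ⟂ M) (hLM : L ⟂ M)
    (h : finrank 𝕜 K + finrank 𝕜 L + finrank 𝕜 M = finrank 𝕜 E) : Kᗮ = L ⊔ M := by
  refine (Submodule.eq_of_le_of_finrank_eq (sup_le hKL.symm hKM.symm) ?_).symm
  have hsup := Submodule.finrank_sup_add_finrank_inf_eq L M
  have hK := K.finrank_add_finrank_orthogonal
  rw [hLM.disjoint.eq_bot, finrank_bot, add_zero] at hsup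
  omega

section Eigenspaces

variable {V : Type*} [Fintype V] [DecidableEq V] {H : Matrix V V ℂ}

lemma eigSp_eq_eigenspace_s10 (H : Matrix V V ℂ) (μ : ℝ) :
    eigSp H μ = End.eigenspace (Matrix.toEuclideanLin H) μ := by
  ext x
  simp [eigSp, sub_eq_zero]

lemma mem_eigSp_iff {μ : ℝ} {x : EuclideanSpace ℂ V} :
    x ∈ eigSp H μ ↔ Matrix.toEuclideanLin H x = (μ : ℂ) • x := by
  rw [eigSp_eq_eigenspace_s10, End.mem_eigenspace_iff]

lemma Matrix.IsHermitian.eigSp_isOrtho (hH : H.IsHermitian) {μ ν : ℝ} (h : μ ≠ ν) :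
    eigSp H μ ⟂ eigSp H ν := by
  simp only [eigSp_eq_eigenspace_s10]
  exact (Matrix.isSymmetric_toEuclideanLin_iff.mpr hH).orthogonalFamily_eigenspaces.isOrtho
    (by exact_mod_cast h)

lemma mainAngle_eq_zero_iff [Nonempty V] {μ : ℝ} :
    mainAngle H μ = 0 ↔ WithLp.toLp 2 (fun _ => 1) ∈ (eigSp H μ)ᗮ := by
  rw [← Submodule.orthogonalProjectionOnto_eq_zero_iff, mainAngle, mul_eq_zero, norm_eq_zero,
    Submodule.coe_eq_zero]
  simp [Fintype.card_ne_zero]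

lemma Matrix.IsHermitian.toEuclideanLin_eq_zero_of_mem_sup (hH : H.IsHermitian) {θ : ℝ}
    (hθ : θ ≠ 0) {x : EuclideanSpace ℂ V} (hx : x ∈ eigSp H 0 ⊔ eigSp H θ)
    (hq : inner ℂ x (Matrix.toEuclideanLin H x) = 0) : Matrix.toEuclideanLin H x = 0 := by
  obtain ⟨b, hb, c, hc, rfl⟩ := Submodule.mem_sup.mp hx
  have hHb : Matrix.toEuclideanLin H b = 0 := by simpa using mem_eigSp_iff.mp hb
  have hHc := mem_eigSp_iff.mp hc
  have hbc : inner ℂ b c = 0 :=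
    Submodule.isOrtho_iff_inner_eq.mp (hH.eigSp_isOrtho (Ne.symm hθ)) b hb c hc
  rw [map_add, hHb, zero_add, hHc, inner_smul_right, inner_add_left, hbc, zero_add] at hq
  have hc0 : c = 0 :=
    inner_self_eq_zero.mp ((mul_eq_zero.mp hq).resolve_left (by exact_mod_cast hθ))
  rw [map_add, hHb, hHc, hc0, smul_zero, add_zero]

lemma inner_ones_toEuclideanLin_ones (H : Matrix V V ℂ) :
    inner ℂ (WithLp.toLp 2 fun _ => (1 : ℂ)) (Matrix.toEuclideanLin H (WithLp.toLp 2 fun _ => 1))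
      = ∑ i, ∑ k, H i k := by
  simp [PiLp.inner_apply, Matrix.mulVec, dotProduct]

end Eigenspaces

lemma sum_sum_smul_sub_transpose {V : Type*} [Fintype V] (A : Matrix V V ℂ) (c : ℂ) :
    ∑ i, ∑ k, (c • (A - Aᵀ)) i k = 0 := by
  simp only [Matrix.smul_apply, Matrix.sub_apply, Matrix.transpose_apply, smul_eq_mul, mul_sub,
    sum_sub_distrib]
  rw [sum_comm (f := fun i k => c * A k i), sub_self]

lemma rowSum_eq_colSum_of_seidel_ones_eq_zero {V : Type*} [Fintype V] [DecidableEq V]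
    {A : Matrix V V ℂ}
    (h : Matrix.toEuclideanLin (Complex.I • (A - Aᵀ)) (WithLp.toLp 2 fun _ => 1) = 0) (v : V) :
    ∑ w, A v w = ∑ w, A w v := by
  have hv := congrFun (congrArg WithLp.ofLp h) v
  simp [Matrix.mulVec, dotProduct] at hv
  exact sub_eq_zero.mp hv

namespace IsTournament

variable {V : Type*} [Fintype V] [DecidableEq V] {A : Matrix V V ℂ}

lemma seidel_isHermitian (hA : IsTournament A) : (Complex.I • (A - Aᵀ)).IsHermitian := by
  have hreal (i j : V) : star (A i j) = A i j := by rcases hA.1 i j with h | h <;> simp [h]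
  ext i j
  simp only [Matrix.conjTranspose_apply, Matrix.smul_apply, Matrix.sub_apply,
    Matrix.transpose_apply, smul_eq_mul, star_mul', star_sub, hreal, Complex.star_def,
    Complex.conj_I]
  ring

lemma rowSum_add_colSum (hA : IsTournament A) (v : V) :
    ∑ w, A v w + ∑ w, A w v = Fintype.card V - 1 := by
  have h (w : V) : A v w + A w v = 1 - (if v = w then 1 else 0 : ℂ) := by
    simpa [Matrix.one_apply] using congrFun (congrFun hA.2 v) w
  simp [← sum_add_distrib, h, sum_sub_distrib]

lemma rowSum_eq_card (hA : IsTournament A) (v : V) : ∑ w, A v w = #{w | A v w = 1} := by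
  rw [natCast_card_filter]
  exact sum_congr rfl fun w _ => by rcases hA.1 v w with h | h <;> simp [h]

lemma odd_card_of_rowSum_eq_colSum (hA : IsTournament A) (v : V)
    (h : ∑ w, A v w = ∑ w, A w v) : Odd (Fintype.card V) := by
  have hsum := hA.rowSum_add_colSum v
  rw [← h, hA.rowSum_eq_card] at hsum
  refine ⟨#{w | A v w = 1}, ?_⟩
  have : ((2 * #{w | A v w = 1} + 1 : ℕ) : ℂ) = Fintype.card V := by
    push_cast
    linear_combination hsum
  exact_mod_cast this.symm

end IsTournament

/-- no tournament on `n = 2d` vertices has Seidel matrix with exactly the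
eigenvalues `−θ, 0, θ` (`θ > 0`) of multiplicities `d − 1, 2, d − 1` such that the
smallest eigenvalue `−θ` is not main. -/
theorem no_tournament_type_one_spectrum_with_zero {d : ℕ} (hd : 0 < d) :
    ¬ ∃ (A : Matrix (Fin (2 * d)) (Fin (2 * d)) ℂ) (θ : ℝ),
      IsTournament A ∧ 0 < θ ∧
      (∀ μ : ℝ, eigSp (Complex.I • (A - Aᵀ)) μ ≠ ⊥ ↔ (μ = -θ ∨ μ = 0 ∨ μ = θ)) ∧
      eigMult (Complex.I • (A - Aᵀ)) (-θ) = d - 1 ∧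
      eigMult (Complex.I • (A - Aᵀ)) 0 = 2 ∧
      eigMult (Complex.I • (A - Aᵀ)) θ = d - 1 ∧
      mainAngle (Complex.I • (A - Aᵀ)) (-θ) = 0 := by
  rintro ⟨A, θ, hA, hθ, -, hneg, hzero, hpos, hmain⟩
  set S := Complex.I • (A - Aᵀ)
  have hS : S.IsHermitian := hA.seidel_isHermitian
  let v : Fin (2 * d) := ⟨0, by omega⟩
  have hdim : eigMult S (-θ) + eigMult S 0 + eigMult S θ =
      finrank ℂ (EuclideanSpace ℂ (Fin (2 * d))) := by
    rw [hneg, hzero, hpos, finrank_euclideanSpace, Fintype.card_fin]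
    omega
  have hj : WithLp.toLp 2 (fun _ => 1) ∈ eigSp S 0 ⊔ eigSp S θ := by
    rw [← Submodule.orthogonal_eq_sup_of_finrank_add_eq (hS.eigSp_isOrtho (by linarith))
      (hS.eigSp_isOrtho (by linarith)) (hS.eigSp_isOrtho (by linarith)) hdim]
    have : Nonempty (Fin (2 * d)) := ⟨v⟩
    exact mainAngle_eq_zero_iff.mp hmain
  have hSj := hS.toEuclideanLin_eq_zero_of_mem_sup hθ.ne' hj
    ((inner_ones_toEuclideanLin_ones S).trans (sum_sum_smul_sub_transpose A _))
  have hodd := hA.odd_card_of_rowSum_eq_colSum v (rowSum_eq_colSum_of_seidel_ones_eq_zero hSj v)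
  rw [Fintype.card_fin] at hodd
  exact Nat.not_odd_iff_even.mpr (even_two_mul d) hodd
end

section
/- Let d be an even positive integer and let X be a complex spherical 2-code in Ω(d). Then |X| ≤ 2d. -/
open Matrix
open scoped Classical

/-!
The Gram matrix of the code is `G = 1 + α A + ᾱ Aᵀ`, where `A` is the adjacency matrix of a
tournament on `n = |X|` vertices, so `G` and `Gᵀ = conj G` have rank at most `d`. Because
`A + Aᵀ = J - 1` and `Re α < 1`, the kernel of `G + Gᵀ = (2 - α - ᾱ) 1 + (α + ᾱ) J` lies in
the line spanned by the all-ones vector. If `n > 2d`, the kernels of `G` and `Gᵀ`, of dimension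
at least `n - d` each, therefore meet exactly in that line and span the whole space, and
`n = 2d + 1`. Then `A` is regular, so `G` and `Gᵀ` commute and `G Gᵀ = 0`. Expanded, this says
`A + A²` is a combination of `1` and `J`; its off-diagonal entries are then one natural number
`b`, and comparing row sums gives `n + 1 = 4b`, so `d` is odd.
-/

open Module
open scoped ComplexConjugate InnerProductSpace

theorem Submodule.inf_eq_and_sup_eq_top_of_finrank_le {K E : Type*} [DivisionRing K]
    [AddCommGroup E] [Module K E] [FiniteDimensional K E] {P Q W : Submodule K E} {d : ℕ}
    (hP : finrank K E ≤ finrank K P + d) (hQ : finrank K E ≤ finrank K Q + d)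
    (hW : finrank K W ≤ 1) (hPQ : P ⊓ Q ≤ W) (hd : 2 * d < finrank K E) :
    P ⊓ Q = W ∧ P ⊔ Q = ⊤ ∧ finrank K E = 2 * d + 1 := by
  have hsum := finrank_sup_add_finrank_inf_eq P Q
  have hsup := (P ⊔ Q).finrank_le
  have hinf := finrank_mono hPQ
  exact ⟨eq_of_le_of_finrank_le hPQ (by omega), eq_top_of_finrank_eq (by omega), by omega⟩

theorem Complex.sub_conj_ne_zero {z : ℂ} (hz : z.im ≠ 0) : z - conj z ≠ 0 := by
  simp [Complex.sub_conj, hz, Complex.I_ne_zero]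

theorem Complex.re_lt_one_of_norm_le_one {z : ℂ} (hz : ‖z‖ ≤ 1) (him : z.im ≠ 0) : z.re < 1 := by
  have hsq := Complex.sq_norm z
  rw [Complex.normSq_apply] at hsq
  nlinarith [norm_nonneg z, sq_pos_of_ne_zero him]

namespace Matrix

variable {m n K : Type*} [Fintype n] [Field K]

theorem finrank_le_finrank_ker_add_rank (M : Matrix m n K) :
    finrank K (n → K) ≤ finrank K (LinearMap.ker M.mulVecLin) + M.rank := by
  rw [rank, ← LinearMap.finrank_range_add_finrank_ker M.mulVecLin, add_comm]

theorem mul_eq_zero_of_commute_of_ker_sup_eq_top {P Q : Matrix n n K} (hPQ : Commute P Q)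
    (hker : LinearMap.ker P.mulVecLin ⊔ LinearMap.ker Q.mulVecLin = ⊤) : P * Q = 0 := by
  refine ext_iff_mulVec.2 fun v => ?_
  obtain ⟨u, hu, w, hw, rfl⟩ := Submodule.mem_sup.1 (hker ▸ Submodule.mem_top : v ∈ _)
  rw [LinearMap.mem_ker, mulVecLin_apply] at hu hw
  have hu' : (P * Q) *ᵥ u = 0 := by rw [hPQ.eq, ← mulVec_mulVec, hu, mulVec_zero]
  have hw' : (P * Q) *ᵥ w = 0 := by rw [← mulVec_mulVec, hw, mulVec_zero]
  rw [mulVec_add, hu', hw', zero_mulVec, add_zero]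

theorem ker_mulVecLin_smul_one_add_smul_le_span [DecidableEq n] {a : K} (ha : a ≠ 0) (b : K) :
    LinearMap.ker (a • (1 : Matrix n n K) + b • of fun _ _ => 1).mulVecLin ≤
      K ∙ fun _ => 1 := by
  intro v hv
  rw [LinearMap.mem_ker, mulVecLin_apply, add_mulVec, smul_mulVec, one_mulVec,
    smul_mulVec] at hv
  refine Submodule.mem_span_singleton.2 ⟨-(b / a) * ∑ i, v i, funext fun i => ?_⟩
  have hi := congrFun hv i
  simp only [Pi.add_apply, Pi.smul_apply, smul_eq_mul, Pi.zero_apply, mulVec, dotProduct,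
    of_apply, one_mul] at hi
  simp only [Pi.smul_apply, smul_eq_mul, mul_one]
  field_simp
  linear_combination -hi

theorem mul_of_one_eq_zero_of_mulVec_eq_zero {o R : Type*} [Semiring R] {M : Matrix m n R}
    (h : M *ᵥ (fun _ => 1) = 0) : M * (of fun _ _ => 1 : Matrix n o R) = 0 := by
  ext i j
  simpa [mul_apply, mulVec, dotProduct] using congrFun h i

theorem rank_gram_le {𝕜 E : Type*} [RCLike 𝕜] [NormedAddCommGroup E] [InnerProductSpace 𝕜 E]
    [FiniteDimensional 𝕜 E] (v : n → E) : (gram 𝕜 v).rank ≤ finrank 𝕜 E := by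
  rw [gram_eq_conjTranspose_mul (stdOrthonormalBasis 𝕜 E)]
  exact (rank_mul_le_right _ _).trans ((rank_le_card_height _).trans (by simp))

end Matrix

local notation "J" => Matrix.of fun _ _ => (1 : ℂ)

namespace IsTournament

variable {V : Type*} [Fintype V] [DecidableEq V] {A : Matrix V V ℂ}

theorem transpose_eq (hA : IsTournament A) : Aᵀ = J - 1 - A := by
  rw [← hA.2, add_sub_cancel_left]

theorem apply_self (hA : IsTournament A) (x : V) : A x x = 0 := by
  simpa using congrFun (congrFun hA.2 x) x

theorem apply_mul_apply_swap (hA : IsTournament A) (x y : V) : A x y * A y x = 0 := by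
  by_cases hxy : x = y
  · simp [hxy, hA.apply_self]
  have hsum := congrFun (congrFun hA.2 x) y
  simp only [Matrix.add_apply, transpose_apply, Matrix.sub_apply, of_apply, one_apply_ne hxy,
    sub_zero] at hsum
  rcases hA.1 x y with h | h <;> simp_all

theorem exists_natCast_eq_add_mul_self_apply (hA : IsTournament A) (x y : V) :
    ∃ m : ℕ, (A + A * A) x y = m := by
  obtain ⟨N, rfl⟩ : ∃ N : Matrix V V ℕ, N.map (Nat.castRingHom ℂ) = A :=
    ⟨of fun x y => if A x y = 1 then 1 else 0, by ext x y; rcases hA.1 x y with h | h <;> simp [h]⟩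
  exact ⟨(N + N * N) x y, by rw [← Matrix.map_mul, ← Matrix.map_add _ (map_add _)]; rfl⟩

theorem regular_of_gram_mul_eq_zero (hA : IsTournament A) {α : ℂ} (hα : α.im ≠ 0)
    (h : (1 + α • A + conj α • Aᵀ) * J = 0) (h' : (1 + α • Aᵀ + conj α • A) * J = 0) :
    A * J = (((Fintype.card V : ℂ) - 1) / 2) • J ∧
      J * A = (((Fintype.card V : ℂ) - 1) / 2) • J := by
  simp only [add_mul, smul_mul_assoc, one_mul] at h h'
  have hdiff : (α - conj α) • (A * J - Aᵀ * J) = 0 := by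
    linear_combination (norm := module) h - h'
  have hAT : Aᵀ * J = A * J :=
    (sub_eq_zero.1 ((smul_eq_zero.1 hdiff).resolve_left (Complex.sub_conj_ne_zero hα))).symm
  have hJJ : (J * J : Matrix V V ℂ) = (Fintype.card V : ℂ) • J := by
    ext; simp [mul_apply]
  have hAJ : A * J = (((Fintype.card V : ℂ) - 1) / 2) • J := by
    rw [hA.transpose_eq, sub_mul, sub_mul, one_mul, hJJ] at hAT
    linear_combination (norm := module) (-(2 : ℂ)⁻¹) • hAT
  have hJ : (Jᵀ : Matrix V V ℂ) = J := rfl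
  refine ⟨hAJ, ?_⟩
  rw [← transpose_transpose (J * A), transpose_mul, hJ, hAT, hAJ, transpose_smul, hJ]

theorem commute_gram (hA : IsTournament A) (hAJ : Commute A J) (α β : ℂ) :
    Commute (1 + α • A + β • Aᵀ) (1 + α • Aᵀ + β • A) := by
  have hAAT : Commute A Aᵀ := by
    rw [hA.transpose_eq]
    exact (hAJ.sub_right (Commute.one_right A)).sub_right (Commute.refl A)
  have hleft : ∀ X, Commute A X → Commute Aᵀ X → Commute (1 + α • A + β • Aᵀ) X :=
    fun X h h' => ((Commute.one_left X).add_left (h.smul_left α)).add_left (h'.smul_left β)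
  exact hleft _
    (((Commute.one_right A).add_right (hAAT.smul_right α)).add_right
      ((Commute.refl A).smul_right β))
    (((Commute.one_right Aᵀ).add_right ((Commute.refl Aᵀ).smul_right α)).add_right
      (hAAT.symm.smul_right β))

theorem exists_add_mul_self_eq_of_gram_mul_eq_zero (hA : IsTournament A) {α : ℂ}
    (hα : α.im ≠ 0) {s : ℂ} (hAJ : A * J = s • J) (hJA : J * A = s • J)
    (h : (1 + α • A + conj α • Aᵀ) * (1 + α • Aᵀ + conj α • A) = 0) :
    ∃ a b : ℂ, A + A * A = a • 1 + b • J := by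
  set c := conj α
  set β := (α - c) * (c - α)
  have hβ : β ≠ 0 := mul_ne_zero (Complex.sub_conj_ne_zero hα)
    (by rw [← neg_sub, neg_ne_zero]; exact Complex.sub_conj_ne_zero hα)
  have hJJ : (J * J : Matrix V V ℂ) = (Fintype.card V : ℂ) • J := by
    ext; simp [mul_apply]
  obtain ⟨p, q, hexp⟩ : ∃ p q : ℂ,
      (1 + α • A + c • Aᵀ) * (1 + α • Aᵀ + c • A) = p • 1 + β • (A + A * A) + q • J :=
    ⟨(1 - c) * (1 - α), (1 - c) * α + c * (1 - α) + (α - c) * α * s + c * (c - α) * s +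
      c * α * Fintype.card V, by
        simp only [hA.transpose_eq, add_mul, mul_add, sub_mul, mul_sub, smul_mul_assoc,
          mul_smul_comm, one_mul, mul_one, hAJ, hJA, hJJ]
        module⟩
  rw [h] at hexp
  refine ⟨-p / β, -q / β, ?_⟩
  calc A + A * A = β⁻¹ • (β • (A + A * A)) := (inv_smul_smul₀ hβ _).symm
    _ = β⁻¹ • (-p • 1 - q • J) := by congr 1; linear_combination (norm := module) -hexp
    _ = _ := by module

theorem card_mod_four_eq_three (hA : IsTournament A) (hcard : 1 < Fintype.card V)
    (hAJ : A * J = (((Fintype.card V : ℂ) - 1) / 2) • J) {a b : ℂ}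
    (h : A + A * A = a • 1 + b • J) : Fintype.card V % 4 = 3 := by
  set n := Fintype.card V
  obtain ⟨x, y, hxy⟩ := Fintype.exists_pair_of_one_lt_card hcard
  have hdiag : a + b = 0 := by
    have hx := congrFun (congrFun h x) x
    simp only [Matrix.add_apply, hA.apply_self, mul_apply, hA.apply_mul_apply_swap,
      Finset.sum_const_zero, add_zero, smul_of, Matrix.smul_apply, one_apply_eq, smul_eq_mul,
      mul_one, of_apply, Pi.smul_apply] at hx
    linear_combination -hx
  obtain ⟨m, hm⟩ := hA.exists_natCast_eq_add_mul_self_apply x y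
  have hoff : b = m := by
    rw [h] at hm
    simpa [one_apply_ne hxy] using hm
  have hJJ : (J * J : Matrix V V ℂ) = (n : ℂ) • J := by
    ext; simp [mul_apply, n]
  set s : ℂ := ((n : ℂ) - 1) / 2
  have hrowJ : (s + s ^ 2) • (J : Matrix V V ℂ) = (a + b * n) • J :=
    calc (s + s ^ 2) • (J : Matrix V V ℂ) = (A + A * A) * J := by
          rw [add_mul, Matrix.mul_assoc, hAJ, Matrix.mul_smul, hAJ]; module
      _ = (a + b * n) • J := by
          rw [h, add_mul, smul_mul_assoc, one_mul, smul_mul_assoc, hJJ]; module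
  have hrow : s + s ^ 2 = a + b * n := by
    simpa using congrFun (congrFun hrowJ x) x
  have hn1 : (n : ℂ) - 1 ≠ 0 := by
    rw [sub_ne_zero]; exact_mod_cast hcard.ne'
  have h4 : ((n : ℂ) - 1) * ((n : ℂ) + 1 - 4 * m) = 0 := by
    linear_combination 4 * hrow + 4 * ((n : ℂ) - 1) * hoff + 4 * hdiag
  have : n + 1 = 4 * m := by
    exact_mod_cast sub_eq_zero.1 ((mul_eq_zero.1 h4).resolve_left hn1)
  omega

theorem card_le_two_mul_of_rank_le (hA : IsTournament A) {α : ℂ} (hα : α.im ≠ 0)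
    (hα1 : ‖α‖ ≤ 1) {d : ℕ} (hd : 0 < d) (heven : Even d)
    (hrank : (1 + α • A + conj α • Aᵀ).rank ≤ d) : Fintype.card V ≤ 2 * d := by
  by_contra! hn
  set G := 1 + α • A + conj α • Aᵀ
  have hGT : Gᵀ = 1 + α • Aᵀ + conj α • A := by
    simp only [G, transpose_add, transpose_smul, transpose_one, transpose_transpose]
  have hτ : 2 - (α + conj α) ≠ 0 := by
    rw [Complex.add_conj]
    intro h
    have hre := congrArg Complex.re h
    norm_num at hre
    linarith [Complex.re_lt_one_of_norm_le_one hα1 hα]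
  have hsum : G + Gᵀ = (2 - (α + conj α)) • 1 + (α + conj α) • J := by
    rw [hGT]
    linear_combination (norm := module) (α + conj α) • hA.2
  have hker : LinearMap.ker G.mulVecLin ⊓ LinearMap.ker Gᵀ.mulVecLin ≤ ℂ ∙ fun _ => 1 :=
    fun v ⟨hvG, hvGT⟩ => by
      apply ker_mulVecLin_smul_one_add_smul_le_span hτ (α + conj α)
      simp only [SetLike.mem_coe, LinearMap.mem_ker, mulVecLin_apply] at hvG hvGT ⊢
      rw [← hsum, add_mulVec, hvG, hvGT, add_zero]
  obtain ⟨hinf, hsup, hcard⟩ := Submodule.inf_eq_and_sup_eq_top_of_finrank_le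
    (G.finrank_le_finrank_ker_add_rank.trans (Nat.add_le_add_left hrank _))
    (Gᵀ.finrank_le_finrank_ker_add_rank.trans (Nat.add_le_add_left (G.rank_transpose ▸ hrank) _))
    (finrank_span_le_card _) hker (by simpa using hn)
  have h1 : (fun _ => (1 : ℂ)) ∈ LinearMap.ker G.mulVecLin ⊓ LinearMap.ker Gᵀ.mulVecLin :=
    hinf ▸ Submodule.mem_span_singleton_self _
  obtain ⟨hAJ, hJA⟩ := hA.regular_of_gram_mul_eq_zero hα
    (mul_of_one_eq_zero_of_mulVec_eq_zero h1.1) (hGT ▸ mul_of_one_eq_zero_of_mulVec_eq_zero h1.2)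
  have hGG : G * Gᵀ = 0 := mul_eq_zero_of_commute_of_ker_sup_eq_top
    (hGT ▸ hA.commute_gram (hAJ.trans hJA.symm) _ _) hsup
  obtain ⟨a, b, hab⟩ := hA.exists_add_mul_self_eq_of_gram_mul_eq_zero hα hAJ hJA (hGT ▸ hGG)
  have hmod := hA.card_mod_four_eq_three (by omega) hAJ hab
  rw [finrank_pi] at hcard
  obtain ⟨k, rfl⟩ := heven
  omega

end IsTournament

namespace IsTwoCode

variable {d : ℕ} {X : Finset (EuclideanSpace ℂ (Fin d))} {α : ℂ}

theorem conj_ne (hX : IsTwoCode X α) : conj α ≠ α :=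
  fun h => hX.1 (Complex.conj_eq_iff_im.1 h)

theorem inner_eq_or {x y : EuclideanSpace ℂ (Fin d)} (hX : IsTwoCode X α) (hx : x ∈ X)
    (hy : y ∈ X) (hxy : x ≠ y) : ⟪x, y⟫_ℂ = α ∨ ⟪x, y⟫_ℂ = conj α := by
  have h : ⟪x, y⟫_ℂ ∈ ({α, conj α} : Set ℂ) := hX.2.2 ▸ ⟨x, hx, y, hy, hxy, rfl⟩
  simpa using h

theorem norm_le_one (hX : IsTwoCode X α) : ‖α‖ ≤ 1 := by
  obtain ⟨x, hx, y, hy, -, rfl⟩ : α ∈ {z : ℂ | ∃ x ∈ X, ∃ y ∈ X, x ≠ y ∧ ⟪x, y⟫_ℂ = z} :=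
    hX.2.2 ▸ Set.mem_insert _ _
  simpa [hX.2.1 x hx, hX.2.1 y hy] using norm_inner_le_norm (𝕜 := ℂ) x y

theorem codeAdj_cases (hX : IsTwoCode X α) {x y : {x // x ∈ X}} (hxy : x ≠ y) :
    (⟪(x : EuclideanSpace ℂ (Fin d)), y⟫_ℂ = α ∧ codeAdj X α x y = 1 ∧ codeAdj X α y x = 0) ∨
      (⟪(x : EuclideanSpace ℂ (Fin d)), y⟫_ℂ = conj α ∧ codeAdj X α x y = 0 ∧
        codeAdj X α y x = 1) := by
  have hyx : ⟪(y : EuclideanSpace ℂ (Fin d)), x⟫_ℂ = conj ⟪(x : EuclideanSpace ℂ (Fin d)), y⟫_ℂ :=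
    (inner_conj_symm _ _).symm
  rcases hX.inner_eq_or x.2 y.2 (Subtype.coe_ne_coe.2 hxy) with h | h
  · left; simp [codeAdj, hxy, Ne.symm hxy, h, hyx, hX.conj_ne]
  · right; simp [codeAdj, hxy, Ne.symm hxy, h, hyx, hX.conj_ne]

theorem isTournament_codeAdj (hX : IsTwoCode X α) : IsTournament (codeAdj X α) := by
  refine ⟨fun x y => by simp only [codeAdj, of_apply]; split_ifs <;> simp, ?_⟩
  ext x y
  by_cases hxy : x = y
  · simp [hxy, codeAdj]
  · rcases hX.codeAdj_cases hxy with ⟨-, h, h'⟩ | ⟨-, h, h'⟩ <;> simp [hxy, h, h']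

theorem gram_eq (hX : IsTwoCode X α) :
    gram ℂ (fun x : {x // x ∈ X} => (x : EuclideanSpace ℂ (Fin d))) =
      1 + α • codeAdj X α + conj α • (codeAdj X α)ᵀ := by
  ext x y
  by_cases hxy : x = y
  · simp [hxy, codeAdj, hX.2.1 y y.2]
  · rcases hX.codeAdj_cases hxy with ⟨hi, h, h'⟩ | ⟨hi, h, h'⟩ <;> simp [hxy, hi, h, h']

end IsTwoCode

/-- a complex spherical 2-code in `Ω(d)`, `d` even, has at most `2d` points. -/
theorem twoCode_card_le_even {d : ℕ} (hd : 0 < d) (heven : Even d)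
    (X : Finset (EuclideanSpace ℂ (Fin d))) (α : ℂ) (hX : IsTwoCode X α) :
    X.card ≤ 2 * d := by
  have hrank := rank_gram_le (𝕜 := ℂ) fun x : {x // x ∈ X} => (x : EuclideanSpace ℂ (Fin d))
  rw [hX.gram_eq, finrank_euclideanSpace_fin] at hrank
  simpa using
    hX.isTournament_codeAdj.card_le_two_mul_of_rank_le hX.1 hX.norm_le_one hd heven hrank
end
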